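/- arXiv:1708.06275 — 4 statements merged into one kernel-verified Lean document; each statement's English description precedes it below -/
import Mathlib

section
/- Let G be a finite simple graph on n ≥ 1 vertices with arboricity at most α (α a positive integer), and let ε > 0 be a real number. Then strictly more than (ε/(2+ε))·n vertices of G have degree at most (2+ε)·α. -/
def SimpleGraph.edgesWithin {V : Type*} [Fintype V] [DecidableEq V]
    (G : SimpleGraph V) [DecidableRel G.Adj] (S : Finset V) : ℕ :=
  (G.edgeFinset.filter (fun e => ∀ x ∈ e, x ∈ S)).card

/-- `G` has arboricity at most `α` in the density sense. -/
def SimpleGraph.ArboricityAtMost {V : Type*} [Fintype V] [DecidableEq V]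
    (G : SimpleGraph V) [DecidableRel G.Adj] (α : ℕ) : Prop :=
  ∀ S : Finset V, 2 ≤ S.card → G.edgesWithin S ≤ α * (S.card - 1)

/-!
A graph of arboricity at most `α` on `n` vertices has at most `α (n - 1)` edges, so its degree sum
is below `2 α n`. By Markov's inequality fewer than `2n / (2 + ε)` vertices have degree above
`(2 + ε) α`, and the remaining vertices number more than `ε n / (2 + ε)`.
-/

open Finset

namespace SimpleGraph

variable {V : Type*} [Fintype V] (G : SimpleGraph V) [DecidableRel G.Adj]

theorem edgesWithin_univ [DecidableEq V] : G.edgesWithin univ = #G.edgeFinset := by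
  simp [edgesWithin]

theorem ArboricityAtMost.card_edgeFinset_le [DecidableEq V] {G : SimpleGraph V}
    [DecidableRel G.Adj] {α : ℕ} (h : G.ArboricityAtMost α) : #G.edgeFinset ≤ α * (Fintype.card V - 1) := by
  rcases le_or_gt 2 (Fintype.card V) with hV | hV
  · simpa only [edgesWithin_univ, card_univ] using h univ (by rwa [card_univ])
  · have : (Fintype.card V).choose 2 = 0 := Nat.choose_eq_zero_of_lt hV
    have := G.card_edgeFinset_le_card_choose_two
    omega

theorem mul_card_filter_lt_degree_le (t : ℝ) :
    t * #{v | t < (G.degree v : ℝ)} ≤ 2 * #G.edgeFinset := by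
  calc t * #{v | t < (G.degree v : ℝ)}
      ≤ ∑ v ∈ {v | t < (G.degree v : ℝ)}, (G.degree v : ℝ) := by
        rw [mul_comm, ← nsmul_eq_mul]
        exact card_nsmul_le_sum _ _ _ fun v hv ↦ (mem_filter.mp hv).2.le
    _ ≤ ∑ v, (G.degree v : ℝ) :=
        sum_le_sum_of_subset_of_nonneg (subset_univ _) fun _ _ _ ↦ by positivity
    _ = 2 * #G.edgeFinset := by exact_mod_cast G.sum_degrees_eq_twice_card_edges

end SimpleGraph

/-- In a finite simple graph on `n ≥ 1` vertices with arboricity at most `α`, strictly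
more than `(ε/(2+ε)) * n` vertices have degree at most `(2+ε) * α`. -/
theorem stmt3 {V : Type*} [Fintype V] [DecidableEq V]
    (G : SimpleGraph V) [DecidableRel G.Adj] (α : ℕ) (hα : 0 < α)
    (ε : ℝ) (hε : 0 < ε) (hn : 1 ≤ Fintype.card V)
    (harb : G.ArboricityAtMost α) :
    (ε / (2 + ε)) * (Fintype.card V : ℝ) <
      ((Finset.univ.filter (fun v => (G.degree v : ℝ) ≤ (2 + ε) * α)).card : ℝ) := by
  set n := Fintype.card V
  set low := #{v | (G.degree v : ℝ) ≤ (2 + ε) * α}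
  have h_high : #{v | (2 + ε) * α < (G.degree v : ℝ)} = n - low := by
    simp_rw [← not_le]
    rw [filter_not, card_sdiff_of_subset (filter_subset _ _), card_univ]
  have h_edges : (#G.edgeFinset : ℝ) ≤ α * (n - 1) := by
    have h : #G.edgeFinset ≤ α * (n - 1) := harb.card_edgeFinset_le
    rify [hn] at h
    exact h
  have h_markov := G.mul_card_filter_lt_degree_le ((2 + ε) * α)
  rw [h_high, Nat.cast_sub (card_le_univ _)] at h_markov
  have h_count : (2 + ε) * (n - low) ≤ 2 * (n - 1) := by
    have hαR : (0 : ℝ) < α := by exact_mod_cast hα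
    nlinarith
  rw [div_mul_eq_mul_div, div_lt_iff₀ (by positivity)]
  linarith
end

section
/- Let G be a finite simple graph on n vertices with arboricity at most α (α a positive integer) and let ε > 0 be a real number. Define W_0 to be the full vertex set of G, and inductively let W_{j+1} be the set of vertices v ∈ W_j whose degree in the induced subgraph G[W_j] is strictly greater than (2+ε)·α. Then for every j ≥ 0, |W_j| ≤ (2/(2+ε))^j · n. -/
/-!
Every vertex surviving a peeling round has degree more than `(2 + ε) α` in `G[W j]`, while the
degrees in `G[W j]` sum to twice its number of edges, which is at most `2 α |W j|` by the
arboricity bound. Hence at most a `2 / (2 + ε)` fraction of `W j` survives each round.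
-/

open Finset

namespace SimpleGraph

variable {V : Type*} (G : SimpleGraph V)

def restrictTo (S : Finset V) : SimpleGraph V where
  Adj v u := G.Adj v u ∧ v ∈ S ∧ u ∈ S
  symm := ⟨fun _ _ h => ⟨h.1.symm, h.2.2, h.2.1⟩⟩
  loopless := ⟨fun v h => G.loopless.irrefl v h.1⟩

@[simp]
lemma restrictTo_adj {S : Finset V} {v u : V} :
    (G.restrictTo S).Adj v u ↔ G.Adj v u ∧ v ∈ S ∧ u ∈ S :=
  Iff.rfl

variable [Fintype V] [DecidableEq V] [DecidableRel G.Adj]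

instance (S : Finset V) : DecidableRel (G.restrictTo S).Adj :=
  fun _ _ => inferInstanceAs (Decidable (_ ∧ _))

lemma degree_restrictTo_of_mem {S : Finset V} {v : V} (hv : v ∈ S) :
    (G.restrictTo S).degree v = #{u ∈ S | G.Adj v u} := by
  rw [← card_neighborFinset_eq_degree]
  congr 1
  ext u
  simp [hv, and_comm]

lemma degree_restrictTo_of_notMem {S : Finset V} {v : V} (hv : v ∉ S) :
    (G.restrictTo S).degree v = 0 := by
  rw [← card_neighborFinset_eq_degree, card_eq_zero]
  ext u
  simp [hv]

lemma card_edgeFinset_restrictTo (S : Finset V) :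
    #(G.restrictTo S).edgeFinset = G.edgesWithin S := by
  unfold edgesWithin
  congr 1
  ext e
  induction e using Sym2.ind with
  | h a b => simp

theorem sum_card_filter_adj_eq_two_mul_edgesWithin (S : Finset V) :
    ∑ v ∈ S, #{u ∈ S | G.Adj v u} = 2 * G.edgesWithin S := by
  rw [← card_edgeFinset_restrictTo, ← sum_degrees_eq_twice_card_edges,
    ← sum_subset (subset_univ S) fun v _ hv => G.degree_restrictTo_of_notMem hv]
  exact sum_congr rfl fun v hv => (G.degree_restrictTo_of_mem hv).symm

lemma edgesWithin_eq_zero_of_card_lt_two {S : Finset V} (hS : #S < 2) : G.edgesWithin S = 0 := by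
  rw [edgesWithin, card_eq_zero, filter_eq_empty_iff]
  intro e he hS'
  induction e using Sym2.ind with
  | h a b =>
    have hab : a ≠ b := (G.mem_edgeFinset.mp he).ne
    exact hS.not_ge (one_lt_card.mpr ⟨a, hS' a (Sym2.mem_mk_left a b), b,
      hS' b (Sym2.mem_mk_right a b), hab⟩)

noncomputable def peel (t : ℝ) (S : Finset V) : Finset V :=
  {v ∈ S | t < #{u ∈ S | G.Adj v u}}

variable {G}

lemma ArboricityAtMost.edgesWithin_le {α : ℕ} (h : G.ArboricityAtMost α) (S : Finset V) :
    G.edgesWithin S ≤ α * #S := by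
  rcases lt_or_ge #S 2 with hS | hS
  · simp [G.edgesWithin_eq_zero_of_card_lt_two hS]
  · exact (h S hS).trans (Nat.mul_le_mul_left α (Nat.sub_le _ _))

lemma ArboricityAtMost.sum_card_filter_adj_le {α : ℕ} (h : G.ArboricityAtMost α)
    (S : Finset V) : ∑ v ∈ S, (#{u ∈ S | G.Adj v u} : ℝ) ≤ 2 * α * #S := by
  have hsum : ∑ v ∈ S, #{u ∈ S | G.Adj v u} ≤ 2 * (α * #S) :=
    G.sum_card_filter_adj_eq_two_mul_edgesWithin S ▸ Nat.mul_le_mul_left 2 (h.edgesWithin_le S)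
  rw [mul_assoc]
  exact_mod_cast hsum

theorem ArboricityAtMost.card_peel_le {α : ℕ} (h : G.ArboricityAtMost α) (hα : 0 < α) {c : ℝ}
    (hc : 0 < c) (S : Finset V) : (#(G.peel (c * α) S) : ℝ) ≤ 2 / c * #S := by
  set T := G.peel (c * α) S
  have hT : c * α * #T ≤ ∑ v ∈ T, (#{u ∈ S | G.Adj v u} : ℝ) := by
    simpa [mul_comm] using card_nsmul_le_sum T _ _ fun v hv => (mem_filter.mp hv).2.le
  have hTS : ∑ v ∈ T, (#{u ∈ S | G.Adj v u} : ℝ) ≤ ∑ v ∈ S, (#{u ∈ S | G.Adj v u} : ℝ) :=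
    sum_le_sum_of_subset_of_nonneg (filter_subset _ _) fun _ _ _ => Nat.cast_nonneg _
  have hcT : c * #T ≤ 2 * #S := by
    have hαT : α * (c * #T) ≤ α * (2 * #S) := by
      linarith [hT.trans (hTS.trans (h.sum_card_filter_adj_le S))]
    exact le_of_mul_le_mul_left hαT (Nat.cast_pos.mpr hα)
  rw [div_mul_eq_mul_div, le_div_iff₀ hc]
  linarith

end SimpleGraph

/-- Peeling process: `W 0` is the whole vertex set, and `W (j+1)` consists of the vertices
of `W j` whose degree inside the induced subgraph `G[W j]` exceeds `(2+ε) * α`.  Then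
`|W j| ≤ (2/(2+ε))^j * n` for every `j`. -/
theorem stmt4 {V : Type*} [Fintype V] [DecidableEq V]
    (G : SimpleGraph V) [DecidableRel G.Adj] (α : ℕ) (hα : 0 < α)
    (ε : ℝ) (hε : 0 < ε)
    (harb : G.ArboricityAtMost α)
    (W : ℕ → Finset V)
    (hW0 : W 0 = Finset.univ)
    (hWsucc : ∀ j, W (j + 1) =
      (W j).filter (fun v => (2 + ε) * α < (((W j).filter (fun u => G.Adj v u)).card : ℝ))) :
    ∀ j, ((W j).card : ℝ) ≤ (2 / (2 + ε)) ^ j * (Fintype.card V : ℝ) := by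
  intro j
  induction j with
  | zero => simp [hW0]
  | succ j ih =>
    calc ((W (j + 1)).card : ℝ) ≤ 2 / (2 + ε) * (W j).card :=
          hWsucc j ▸ harb.card_peel_le hα (by positivity) (W j)
      _ ≤ 2 / (2 + ε) * ((2 / (2 + ε)) ^ j * Fintype.card V) := by gcongr
      _ = (2 / (2 + ε)) ^ (j + 1) * Fintype.card V := by ring
end

section
/- Let V be a finite set with |V| = n ≥ 2, let r be a binary relation on V (a directed graph) in which every vertex has at most d out-neighbors, where d ≥ 2. Let (X_v)_{v ∈ V} be a family of independent {0,1}-valued random variables with P[X_v = 1] ≤ d^{−2} for every v. Set L = ⌈11 · log₂ n⌉. Then the probability that there exists a directed simple path v_0, v_1, …, v_L (with all vertices distinct and r(v_i, v_{i+1}) for all i) such that X_{v_i} = 1 for every 0 ≤ i ≤ L is at most n^{−10}. In other words, with high probability the subgraph induced by the vertices v with X_v = 1 contains no directed path with more than O(log n) vertices. -/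
/-!
First moment method. Out-degrees at most `d` leave at most `n d^L` walks with `L + 1`
vertices, and by independence each simple one survives with probability at most
`d^(-2(L+1))`. The expected number of surviving simple paths is thus at most
`n d^(-L-2) ≤ n 2^(-L)`, and `2^L ≥ n^11` for `L = ⌈11 log₂ n⌉`.
-/

open MeasureTheory ProbabilityTheory
open scoped ENNReal

lemma Nat.card_walks_le {V : Type*} [Finite V] {r : V → V → Prop} {d : ℕ}
    (hdeg : ∀ v, Nat.card {u // r v u} ≤ d) (m : ℕ) :
    Nat.card {w : Fin (m + 1) → V // ∀ i : Fin m, r (w i.castSucc) (w i.succ)}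
      ≤ Nat.card V * d ^ m := by
  let e (v : V) : {u // r v u} ↪ Fin d :=
    (Finite.equivFin _).toEmbedding.trans (Fin.castLEEmb (hdeg v))
  have e_inj : ∀ a b : V, a = b → ∀ (x : {u // r a u}) (y : {u // r b u}),
      e a x = e b y → (x : V) = y := by
    rintro a _ rfl x y h
    exact congrArg Subtype.val ((e a).injective h)
  let code (w : {w : Fin (m + 1) → V // ∀ i : Fin m, r (w i.castSucc) (w i.succ)}) :
      V × (Fin m → Fin d) :=
    (w.1 0, fun i => e (w.1 i.castSucc) ⟨w.1 i.succ, w.2 i⟩)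
  have code_inj : code.Injective := by
    rintro ⟨w, hw⟩ ⟨w', hw'⟩ h
    obtain ⟨h0, h1⟩ := Prod.mk.inj h
    ext i
    induction i using Fin.induction with
    | zero => exact h0
    | succ j ih => exact e_inj _ _ ih _ _ (congrFun h1 j)
  calc _ ≤ Nat.card (V × (Fin m → Fin d)) := Nat.card_le_card_of_injective code code_inj
    _ = Nat.card V * d ^ m := by simp

lemma ProbabilityTheory.iIndepFun.measure_iInter_preimage_le_pow {Ω V ι β : Type*}
    [MeasurableSpace Ω] {μ : Measure Ω} [MeasurableSpace β] {X : V → Ω → β}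
    (hX : iIndepFun X μ) {s : Set β} (hs : MeasurableSet s) {p : ℝ≥0∞}
    (hp : ∀ u, μ (X u ⁻¹' s) ≤ p) [Fintype ι] {v : ι → V} (hv : v.Injective) :
    μ (⋂ i, X (v i) ⁻¹' s) ≤ p ^ Fintype.card ι := by
  rw [(hX.precomp hv).meas_iInter fun i => ⟨s, hs, rfl⟩]
  calc ∏ i, μ (X (v i) ⁻¹' s) ≤ ∏ _i : ι, p := Finset.prod_le_prod' fun i _ => hp (v i)
    _ = p ^ Fintype.card ι := by rw [Finset.prod_const, Finset.card_univ]

lemma Nat.pow_le_two_pow_ceil_mul_logb (k : ℕ) {n : ℕ} (hn : n ≠ 0) :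
    n ^ k ≤ 2 ^ ⌈k * Real.logb 2 n⌉₊ := by
  have hpos : (0 : ℝ) < (n : ℝ) ^ k := by positivity
  have : Real.logb 2 ((n : ℝ) ^ k) ≤ ⌈k * Real.logb 2 n⌉₊ := by
    rw [Real.logb_pow]
    exact Nat.le_ceil _
  rw [Real.logb_le_iff_le_rpow one_lt_two hpos, Real.rpow_natCast] at this
  exact_mod_cast this

lemma ENNReal.natCast_div_le_inv_of_mul_le {a b c : ℕ} (h : a * c ≤ b) :
    (a / b : ℝ≥0∞) ≤ (c : ℝ≥0∞)⁻¹ := by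
  rw [ENNReal.le_inv_iff_mul_le, ← ENNReal.mul_div_right_comm]
  calc (a * c / b : ℝ≥0∞) ≤ b / b := by gcongr; exact_mod_cast h
    _ ≤ 1 := ENNReal.div_self_le_one

theorem measure_exists_injective_walk_le {Ω V β : Type*} [MeasurableSpace Ω] {μ : Measure Ω}
    [Finite V] [MeasurableSpace β] {r : V → V → Prop} {d : ℕ}
    (hdeg : ∀ v, Nat.card {u // r v u} ≤ d) {X : V → Ω → β} (hX : iIndepFun X μ)
    {s : Set β} (hs : MeasurableSet s) {p : ℝ≥0∞} (hp : ∀ u, μ (X u ⁻¹' s) ≤ p) (L : ℕ) :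
    μ {ω | ∃ v : Fin (L + 1) → V, v.Injective ∧ (∀ i : Fin L, r (v i.castSucc) (v i.succ)) ∧
        ∀ i, X (v i) ω ∈ s}
      ≤ (Nat.card V * d ^ L : ℕ) * p ^ (L + 1) := by
  let W := {v : Fin (L + 1) → V // v.Injective ∧ ∀ i : Fin L, r (v i.castSucc) (v i.succ)}
  have : Fintype W := Fintype.ofFinite W
  have hW : Nat.card W ≤ Nat.card V * d ^ L :=
    (Nat.card_le_card_of_injective _ (Subtype.impEmbedding _ _ fun _ hv => hv.2).injective).trans
      (Nat.card_walks_le hdeg L)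
  calc _ ≤ μ (⋃ w : W, ⋂ i, X (w.1 i) ⁻¹' s) := by
        refine measure_mono fun ω ⟨v, hinj, hwalk, hv⟩ => ?_
        exact Set.mem_iUnion.2 ⟨⟨v, hinj, hwalk⟩, Set.mem_iInter.2 hv⟩
    _ ≤ ∑ w : W, μ (⋂ i, X (w.1 i) ⁻¹' s) := measure_iUnion_fintype_le _ _
    _ ≤ ∑ _w : W, p ^ (L + 1) := Finset.sum_le_sum fun w _ => by
        simpa using hX.measure_iInter_preimage_le_pow hs hp w.2.1
    _ ≤ (Nat.card V * d ^ L : ℕ) * p ^ (L + 1) := by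
        rw [Finset.sum_const, nsmul_eq_mul, Finset.card_univ, ← Nat.card_eq_fintype_card]
        gcongr

theorem stmt12_general {Ω : Type*} [MeasurableSpace Ω] (P : Measure Ω) [IsProbabilityMeasure P]
    {V : Type*} [Fintype V] (n d : ℕ)
    (hn : Fintype.card V = n) (hn2 : 2 ≤ n) (hd : 2 ≤ d)
    (r : V → V → Prop)
    (hdeg : ∀ v : V, Nat.card {u : V // r v u} ≤ d)
    (X : V → Ω → Bool)
    (hindep : iIndepFun X P)
    (hX : ∀ v, P {ω | X v ω = true} ≤ ((d : ℝ≥0∞) ^ 2)⁻¹) :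
    P {ω | ∃ v : Fin (⌈11 * Real.logb 2 n⌉₊ + 1) → V,
        Function.Injective v ∧
        (∀ i : Fin ⌈11 * Real.logb 2 n⌉₊, r (v i.castSucc) (v i.succ)) ∧
        (∀ i, X (v i) ω = true)} ≤ ((n : ℝ≥0∞) ^ 10)⁻¹ := by
  set L := ⌈11 * Real.logb 2 n⌉₊
  have hlog : n ^ 11 ≤ 2 ^ L := by
    simpa using Nat.pow_le_two_pow_ceil_mul_logb 11 (n := n) (by omega)
  have hcount : n * d ^ L * n ^ 10 ≤ d ^ (2 * (L + 1)) :=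
    calc n * d ^ L * n ^ 10 = n ^ 11 * d ^ L := by ring
      _ ≤ d ^ L * d ^ L := Nat.mul_le_mul_right _ (hlog.trans (Nat.pow_le_pow_left hd L))
      _ ≤ d ^ (2 * (L + 1)) := by rw [← pow_add]; exact Nat.pow_le_pow_right (by omega) (by omega)
  calc _ ≤ (Nat.card V * d ^ L : ℕ) * ((d : ℝ≥0∞) ^ 2)⁻¹ ^ (L + 1) :=
        measure_exists_injective_walk_le hdeg hindep (measurableSet_singleton true) hX L
    _ = (n * d ^ L : ℕ) / (d ^ (2 * (L + 1)) : ℕ) := by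
        rw [Nat.card_eq_fintype_card, hn, ← ENNReal.inv_pow, ← pow_mul, div_eq_mul_inv]
        simp only [Nat.cast_mul, Nat.cast_pow]
    _ ≤ ((n : ℝ≥0∞) ^ 10)⁻¹ := by
        exact_mod_cast ENNReal.natCast_div_le_inv_of_mul_le hcount

/-- In a directed graph on `n ≥ 2` vertices with out-degrees at most `d ≥ 2`, if each
vertex survives independently with probability at most `d⁻²`, then with probability at
least `1 - n⁻¹⁰` the surviving vertices contain no directed simple path with
`L + 1 = ⌈11 log₂ n⌉ + 1` vertices, i.e. no directed path longer than `O(log n)`. -/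
theorem stmt12 {Ω : Type*} [MeasurableSpace Ω] (P : Measure Ω) [IsProbabilityMeasure P]
    {V : Type*} [Fintype V] (n d : ℕ)
    (hn : Fintype.card V = n) (hn2 : 2 ≤ n) (hd : 2 ≤ d)
    (r : V → V → Prop)
    (hdeg : ∀ v : V, Nat.card {u : V // r v u} ≤ d)
    (X : V → Ω → Bool)
    (hmeas : ∀ v, Measurable (X v))
    (hindep : iIndepFun X P)
    (hX : ∀ v, P {ω | X v ω = true} ≤ ((d : ℝ≥0∞) ^ 2)⁻¹) :
    P {ω | ∃ v : Fin (⌈11 * Real.logb 2 n⌉₊ + 1) → V,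
        Function.Injective v ∧
        (∀ i : Fin ⌈11 * Real.logb 2 n⌉₊, r (v i.castSucc) (v i.succ)) ∧
        (∀ i, X (v i) ω = true)} ≤ ((n : ℝ≥0∞) ^ 10)⁻¹ :=
  stmt12_general P n d hn hn2 hd r hdeg X hindep hX
end

section
/- Define the tetration of a real base b > 1 by T(b, 0) = 1 and T(b, k+1) = b^{T(b, k)}. Then for every natural number i, T(2, i+1) ≤ 2 · T(1.98, i+2). Equivalently, setting d_{i+1} = d / T(2, i+1) and ε = 16 · T(1.98, i+2) / T(2, i+1) for any real d > 0, one has (2 + ε) · d / (20 · T(1.98, i+2)) ≤ d / T(2, i+1). -/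
/-!
The second claim is the first one after clearing denominators, and the first follows from
`1.9 * T(2, k) ≤ T(1.98, k + 1)`, proved by induction on `k`. For `a = T(2, k + 1) ≥ 2` the
inductive step is `1.9 * 2 ^ a ≤ (1.98 ^ 1.9) ^ a`, which holds because
`1.98 ^ 1.9 ≥ 2.76 = 2 * 1.38` and `1.38 ^ a ≥ 1.38 ^ 2 ≥ 1.9`; the case `k = 1`, where
the exponent is only `1`, is the numerical fact `1.98 ^ 1.98 ≥ 3.8`.
-/

/-- Tetration with real base `b`: `tetr b k` is a tower of `k` copies of `b`, with
`tetr b 0 = 1` and `tetr b (k+1) = b ^ (tetr b k)` (real exponentiation). -/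
noncomputable def tetr (b : ℝ) : ℕ → ℝ
  | 0 => 1
  | k + 1 => b ^ tetr b k

theorem tetr_zero (b : ℝ) : tetr b 0 = 1 := rfl

theorem tetr_succ (b : ℝ) (k : ℕ) : tetr b (k + 1) = b ^ tetr b k := rfl

theorem one_le_tetr {b : ℝ} (hb : 1 ≤ b) : ∀ k, 1 ≤ tetr b k
  | 0 => le_rfl
  | k + 1 => Real.one_le_rpow hb (zero_le_one.trans (one_le_tetr hb k))

theorem le_tetr_succ {b : ℝ} (hb : 1 ≤ b) (k : ℕ) : b ≤ tetr b (k + 1) :=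
  Real.self_le_rpow_of_one_le hb (one_le_tetr hb k)

theorem le_rpow_div_of_pow_le {b c : ℝ} (hb : 0 ≤ b) {m n : ℕ} (hn : n ≠ 0)
    (h : c ^ n ≤ b ^ m) : c ≤ b ^ ((m : ℝ) / n) := by
  refine le_of_pow_le_pow_left₀ hn (by positivity) ?_
  rwa [← Real.rpow_natCast (b ^ _), ← Real.rpow_mul hb, div_mul_cancel₀ _ (by positivity),
    Real.rpow_natCast]

theorem one_nine_mul_two_rpow_le {a : ℝ} (ha : 2 ≤ a) :
    1.9 * (2 : ℝ) ^ a ≤ (1.98 : ℝ) ^ (1.9 * a) := by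
  have h19 : (2.76 : ℝ) ≤ 1.98 ^ (1.9 : ℝ) := by
    have := le_rpow_div_of_pow_le (b := 1.98) (c := 2.76) (m := 19) (n := 10) (by norm_num)
      (by norm_num) (by norm_num)
    norm_num at this ⊢
    exact this
  have h138 : (1.9 : ℝ) ≤ 1.38 ^ a :=
    calc (1.9 : ℝ) ≤ 1.38 ^ (2 : ℝ) := by norm_num
      _ ≤ 1.38 ^ a := Real.rpow_le_rpow_of_exponent_le (by norm_num) ha
  calc 1.9 * (2 : ℝ) ^ a ≤ 1.38 ^ a * 2 ^ a := by gcongr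
    _ = 2.76 ^ a := by rw [← Real.mul_rpow (by norm_num) (by norm_num)]; norm_num
    _ ≤ (1.98 ^ (1.9 : ℝ)) ^ a := by gcongr
    _ = 1.98 ^ (1.9 * a) := (Real.rpow_mul (by norm_num) _ _).symm

theorem one_nine_mul_tetr_two_le : ∀ k, 1.9 * tetr 2 k ≤ tetr 1.98 (k + 1)
  | 0 => by norm_num [tetr_succ, tetr_zero]
  | 1 => by
    have := le_rpow_div_of_pow_le (b := 1.98) (c := 3.8) (m := 99) (n := 50) (by norm_num)
      (by norm_num) (by norm_num)
    norm_num [tetr_succ, tetr_zero] at this ⊢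
    exact this
  | k + 2 =>
    calc 1.9 * tetr 2 (k + 2) ≤ 1.98 ^ (1.9 * tetr 2 (k + 1)) :=
          one_nine_mul_two_rpow_le (le_tetr_succ (by norm_num) k)
      _ ≤ 1.98 ^ tetr 1.98 (k + 2) :=
          Real.rpow_le_rpow_of_exponent_le (by norm_num) (one_nine_mul_tetr_two_le (k + 1))

/-- For every `i`, `T(2, i+1) ≤ 2 * T(1.98, i+2)`; equivalently, with
`ε = 16 * T(1.98, i+2) / T(2, i+1)`, for every `d > 0` one has
`(2 + ε) * d / (20 * T(1.98, i+2)) ≤ d / T(2, i+1)`. -/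
theorem stmt14 (i : ℕ) :
    tetr 2 (i + 1) ≤ 2 * tetr 1.98 (i + 2) ∧
    ∀ d : ℝ, 0 < d →
      (2 + 16 * tetr 1.98 (i + 2) / tetr 2 (i + 1)) * d / (20 * tetr 1.98 (i + 2)) ≤
        d / tetr 2 (i + 1) := by
  have ha : 0 < tetr 2 (i + 1) := zero_lt_one.trans_le (one_le_tetr (by norm_num) _)
  have hb : 0 < tetr 1.98 (i + 2) := zero_lt_one.trans_le (one_le_tetr (by norm_num) _)
  have hab : tetr 2 (i + 1) ≤ 2 * tetr 1.98 (i + 2) := by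
    linarith [one_nine_mul_tetr_two_le (i + 1)]
  refine ⟨hab, fun d hd => ?_⟩
  rw [div_le_div_iff₀ (by positivity) ha]
  field_simp
  nlinarith
end
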